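/- Let K ≥ 1 be the number of neighborhoods with sizes n_1,…,n_K ≥ 1, m_k = C(n_k,2), M = ∑_{k=1}^K m_k ≥ 1, N = max_k n_k, let X = ∏_{k=1}^K {0,1}^{m_k}, and let p be an exponential-family pmf with local dependence on X. Let Θ₀ ⊆ ℝ^q be a nonempty set, θ̇ ∈ Θ₀, 𝛂 : ℝ^q → ℝ^d a map, b : X → ℝ^d a statistic, and μ̄ = ∑_x p(x)·b(x). Fix ε > 0, α₀ > 0, A₃ > 0, A₄ > 0, and let G = {x ∈ X : |⟨𝛂(θ̇), b(x) − μ̄⟩| < α₀·M}. Assume: (C3) for all θ₁, θ₂ ∈ Θ₀, |⟨𝛂(θ₁) − 𝛂(θ₂), b(x)⟩| ≤ A₃·‖θ₁ − θ₂‖₂·M for every x ∈ G, and |⟨𝛂(θ₁) − 𝛂(θ₂), μ̄⟩| ≤ A₃·‖θ₁ − θ₂‖₂·M; (C4) for all θ ∈ Θ₀ and all x, y ∈ X, |⟨𝛂(θ), b(x) − b(y)⟩| ≤ A₄·d(x,y)·N; (net) there exist θ_1,…,θ_L ∈ Θ₀ such that every θ ∈ Θ₀ satisfies ‖θ − θ_l‖₂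 < ε/(6·A₃) for some l. Then the probability under p of the event that there exists θ ∈ Θ₀ with |⟨𝛂(θ), b(X) − μ̄⟩| ≥ ε·M is at most 2·exp(−α₀²·M/(2·A₄²·N⁶)) + 2·L·exp(−ε²·M/(18·A₄²·N⁶)). -/

import Mathlib

/-!
For a fixed `θ`, the statistic `x ↦ ⟨𝛂(θ), b(x)⟩` changes by at most `A₄·N·m_k` when only
neighborhood `k` is resampled, and under local dependence the neighborhoods are independent,
so McDiarmid's bounded-differences inequality gives a sub-Gaussian tail with variance proxy
`∑ₖ (A₄·N·m_k)² ≤ A₄²·N⁴·M`. Outside the event `α₀·M ≤ |⟨𝛂(θ̇), b(X) − μ̄⟩|`, condition [C.3]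
makes `θ ↦ ⟨𝛂(θ), b(X) − μ̄⟩` vary by less than `ε·M/3` between `θ` and its nearest net point,
so a deviation `ε·M` somewhere on `Θ₀` forces a deviation `ε·M/3` at one of the `L` net points;
a union bound over these `L + 1` tail events finishes the proof.
-/

open scoped BigOperators

/-- The sample space of binary within-neighborhood edge variables. -/
abbrev Cfg (K : ℕ) (n : Fin K → ℕ) : Type :=
  (k : Fin K) → Fin (Nat.choose (n k) 2) → Bool

def hamDist {K : ℕ} {n : Fin K → ℕ} (x y : Cfg K n) : ℕ :=
  ∑ k, (Finset.univ.filter (fun e => x k e ≠ y k e)).card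

open Finset Real MeasureTheory ProbabilityTheory

section FiniteWeights

variable {α : Type*} [Fintype α] {w : α → ℝ}

theorem sum_mul_le_of_le (hw0 : ∀ a, 0 ≤ w a) (hw1 : ∑ a, w a = 1) {f : α → ℝ} {c : ℝ}
    (hf : ∀ a, f a ≤ c) : ∑ a, w a * f a ≤ c :=
  calc ∑ a, w a * f a ≤ ∑ a, w a * c :=
        sum_le_sum fun a _ => mul_le_mul_of_nonneg_left (hf a) (hw0 a)
    _ = c := by rw [← sum_mul, hw1, one_mul]

theorem sum_mul_exp_mul_sub_le (hw0 : ∀ a, 0 ≤ w a) (hw1 : ∑ a, w a = 1) {f : α → ℝ} {c : ℝ}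
    (hf : ∀ a a', f a - f a' ≤ c) (l : ℝ) :
    ∑ a, w a * exp (l * (f a - ∑ a', w a' * f a')) ≤ exp (c ^ 2 * l ^ 2 / 8) := by
  let _ : MeasurableSpace α := ⊤
  have hsum : ∑ a, ENNReal.ofReal (w a) = 1 := by
    rw [← ENNReal.ofReal_sum_of_nonneg fun a _ => hw0 a, hw1, ENNReal.ofReal_one]
  let μ := (PMF.ofFintype _ hsum).toMeasure
  have hμ : ∀ g : α → ℝ, μ[g] = ∑ a, w a * g a := fun g => by
    simp [μ, PMF.integral_eq_sum, ENNReal.toReal_ofReal (hw0 _)]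
  obtain ⟨a₀, ha₀⟩ : ∃ a₀, ∀ a, f a₀ ≤ f a := by
    have : Nonempty α := by
      by_contra h
      simp [not_nonempty_iff.mp h] at hw1
    exact Finite.exists_min f
  have hoeffding := hasSubgaussianMGF_of_mem_Icc (μ := μ) (X := f) (a := f a₀) (b := f a₀ + c)
    Measurable.of_discrete.aemeasurable
    (ae_of_all _ fun a => ⟨ha₀ a, by linarith [hf a a₀]⟩)
  convert hoeffding.mgf_le l using 1
  · rw [mgf, hμ, hμ]
  · congr 1
    simp only [add_sub_cancel_left, NNReal.coe_pow, NNReal.coe_div, coe_nnnorm, norm_eq_abs,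
      NNReal.coe_ofNat, div_pow, sq_abs]
    ring

end FiniteWeights

theorem Fin.sum_pi_succ {β : Type*} [AddCommMonoid β] {K : ℕ} {F : Fin (K + 1) → Type*}
    [∀ k, Fintype (F k)] (f : (∀ k, F k) → β) :
    ∑ x, f x = ∑ a : F 0, ∑ x : ∀ k : Fin K, F k.succ, f (Fin.cons a x) := by
  rw [← (Fin.consEquiv F).sum_comp, Fintype.sum_prod_type]
  rfl

section BoundedDifferences

variable {K : ℕ} {F : Fin K → Type*} [∀ k, Fintype (F k)] {w : ∀ k, F k → ℝ}

theorem sum_prod_mul_exp_mul_sub_le (hw0 : ∀ k a, 0 ≤ w k a) (hw1 : ∀ k, ∑ a, w k a = 1)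
    {g : (∀ k, F k) → ℝ} {c : Fin K → ℝ}
    (hg : ∀ x k a a', g (Function.update x k a) - g (Function.update x k a') ≤ c k) (l : ℝ) :
    ∑ x, (∏ k, w k (x k)) * exp (l * (g x - ∑ y, (∏ k, w k (y k)) * g y)) ≤
      exp ((∑ k, c k ^ 2) * l ^ 2 / 8) := by
  induction K with
  | zero => simp
  | succ K ih =>
    -- `h` averages out the first coordinate: Hoeffding's lemma bounds the fluctuation of `g`
    -- around `h` in that coordinate, the induction hypothesis the fluctuation of `h`
    set h : (∀ k : Fin K, F k.succ) → ℝ := fun x => ∑ a, w 0 a * g (Fin.cons a x)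
    have prod_cons : ∀ a (x : ∀ k : Fin K, F k.succ),
        ∏ k, w k (Fin.cons a x k) = w 0 a * ∏ k, w k.succ (x k) := fun a x => by
      simp [Fin.prod_univ_succ]
    have mean_eq : ∑ y, (∏ k, w k (y k)) * g y = ∑ y, (∏ k, w k.succ (y k)) * h y := by
      simp only [Fin.sum_pi_succ, prod_cons, h, mul_sum]
      rw [sum_comm]
      exact sum_congr rfl fun _ _ => sum_congr rfl fun _ _ => by ring
    have hh : ∀ x k b b', h (Function.update x k b) - h (Function.update x k b') ≤ c k.succ := by
      intro x k b b'
      simp only [h, ← sum_sub_distrib, ← mul_sub, Fin.cons_update]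
      exact sum_mul_le_of_le (hw0 0) (hw1 0) fun a => hg _ _ _ _
    have hfirst : ∀ x a a', g (Fin.cons a x) - g (Fin.cons a' x) ≤ c 0 := fun x a a' => by
      simpa using hg (Fin.cons a x) 0 a a'
    calc ∑ x, (∏ k, w k (x k)) * exp (l * (g x - ∑ y, (∏ k, w k (y k)) * g y))
        = ∑ x, (∏ k, w k.succ (x k)) * exp (l * (h x - ∑ y, (∏ k, w k.succ (y k)) * h y)) *
            ∑ a, w 0 a * exp (l * (g (Fin.cons a x) - h x)) := by
          rw [Fin.sum_pi_succ, sum_comm, mean_eq]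
          refine sum_congr rfl fun x _ => ?_
          rw [mul_sum]
          refine sum_congr rfl fun a _ => ?_
          rw [prod_cons, mul_mul_mul_comm, ← exp_add]
          ring_nf
      _ ≤ ∑ x, (∏ k, w k.succ (x k)) * exp (l * (h x - ∑ y, (∏ k, w k.succ (y k)) * h y)) *
            exp (c 0 ^ 2 * l ^ 2 / 8) := by
          refine sum_le_sum fun x _ => mul_le_mul_of_nonneg_left ?_ ?_
          · exact sum_mul_exp_mul_sub_le (hw0 0) (hw1 0) (hfirst x) l
          · exact mul_nonneg (prod_nonneg fun k _ => hw0 _ _) (exp_pos _).le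
      _ ≤ exp ((∑ k : Fin K, c k.succ ^ 2) * l ^ 2 / 8) * exp (c 0 ^ 2 * l ^ 2 / 8) := by
          rw [← sum_mul]
          exact mul_le_mul_of_nonneg_right (ih (fun k => hw0 k.succ) (fun k => hw1 k.succ) hh)
            (exp_pos _).le
      _ = exp ((∑ k, c k ^ 2) * l ^ 2 / 8) := by
          rw [← exp_add, Fin.sum_univ_succ]
          ring_nf

end BoundedDifferences

section Chernoff

variable {α : Type*} [Fintype α] {W : α → ℝ}

theorem sum_filter_le_exp_of_sum_mul_exp_le (hW : ∀ x, 0 ≤ W x) {Y : α → ℝ} {V t : ℝ}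
    (hV : 0 < V) (ht : 0 ≤ t)
    (hmgf : ∀ l, 0 ≤ l → ∑ x, W x * exp (l * Y x) ≤ exp (V * l ^ 2 / 2)) :
    ∑ x with t ≤ Y x, W x ≤ exp (-t ^ 2 / (2 * V)) := by
  have hl : 0 ≤ t / V := div_nonneg ht hV.le
  calc ∑ x with t ≤ Y x, W x
      ≤ ∑ x with t ≤ Y x, W x * (exp (-(t / V * t)) * exp (t / V * Y x)) := by
        refine sum_le_sum fun x hx => le_mul_of_one_le_right (hW x) ?_
        rw [← exp_add, one_le_exp_iff]
        nlinarith [(mem_filter.mp hx).2]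
    _ ≤ ∑ x, W x * (exp (-(t / V * t)) * exp (t / V * Y x)) :=
        sum_le_sum_of_subset_of_nonneg (filter_subset _ _) fun x _ _ =>
          mul_nonneg (hW x) (by positivity)
    _ = exp (-(t / V * t)) * ∑ x, W x * exp (t / V * Y x) := by
        rw [mul_sum]
        exact sum_congr rfl fun x _ => by ring
    _ ≤ exp (-(t / V * t)) * exp (V * (t / V) ^ 2 / 2) := by gcongr; exact hmgf _ hl
    _ = exp (-t ^ 2 / (2 * V)) := by
        rw [← exp_add]
        congr 1
        field_simp
        ring

theorem sum_filter_le_sum_filter_add (hW : ∀ x, 0 ≤ W x) {P Q R : α → Prop} [DecidablePred P]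
    [DecidablePred Q] [DecidablePred R] (h : ∀ x, P x → Q x ∨ R x) :
    ∑ x with P x, W x ≤ ∑ x with Q x, W x + ∑ x with R x, W x := by
  simp only [sum_filter, ← sum_add_distrib]
  refine sum_le_sum fun x _ => ?_
  have hQ := ite_nonneg (p := Q x) (hW x) le_rfl
  have hR := ite_nonneg (p := R x) (hW x) le_rfl
  by_cases hP : P x
  · rcases h x hP with hQx | hRx
    · rw [if_pos hP, if_pos hQx]; linarith
    · rw [if_pos hP, if_pos hRx]; linarith
  · rw [if_neg hP]; linarith

theorem sum_filter_le_sum_sum_filter (hW : ∀ x, 0 ≤ W x) {ι : Type*} [Fintype ι]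
    {P : α → Prop} {Q : ι → α → Prop} [DecidablePred P] [∀ i, DecidablePred (Q i)]
    (h : ∀ x, P x → ∃ i, Q i x) :
    ∑ x with P x, W x ≤ ∑ i, ∑ x with Q i x, W x := by
  simp only [sum_filter]
  rw [sum_comm]
  refine sum_le_sum fun x _ => ?_
  have hQ : ∀ i ∈ univ, 0 ≤ if Q i x then W x else 0 := fun i _ => ite_nonneg (hW x) le_rfl
  by_cases hP : P x
  · obtain ⟨i, hi⟩ := h x hP
    calc (if P x then W x else 0) = if Q i x then W x else 0 := by rw [if_pos hP, if_pos hi]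
      _ ≤ _ := single_le_sum hQ (mem_univ i)
  · rw [if_neg hP]
    exact sum_nonneg hQ

theorem sum_filter_abs_le_two_mul_exp (hW : ∀ x, 0 ≤ W x) {Y : α → ℝ} {V t : ℝ}
    (hV : 0 < V) (ht : 0 ≤ t) (hmgf : ∀ l, ∑ x, W x * exp (l * Y x) ≤ exp (V * l ^ 2 / 2)) :
    ∑ x with t ≤ |Y x|, W x ≤ 2 * exp (-t ^ 2 / (2 * V)) := by
  have hneg : ∀ l, 0 ≤ l → ∑ x, W x * exp (l * -Y x) ≤ exp (V * l ^ 2 / 2) := fun l _ => by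
    simpa [neg_sq] using hmgf (-l)
  calc ∑ x with t ≤ |Y x|, W x ≤ ∑ x with t ≤ Y x, W x + ∑ x with t ≤ -Y x, W x :=
        sum_filter_le_sum_filter_add hW fun x hx => le_abs.mp hx
    _ ≤ 2 * exp (-t ^ 2 / (2 * V)) := by
        linarith [sum_filter_le_exp_of_sum_mul_exp_le hW hV ht fun l _ => hmgf l,
          sum_filter_le_exp_of_sum_mul_exp_le hW hV ht hneg]

end Chernoff

theorem mcdiarmid {K : ℕ} {F : Fin K → Type*} [∀ k, Fintype (F k)] {w : ∀ k, F k → ℝ}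
    (hw0 : ∀ k a, 0 ≤ w k a) (hw1 : ∀ k, ∑ a, w k a = 1) {g : (∀ k, F k) → ℝ} {c : Fin K → ℝ}
    (hg : ∀ x k a a', g (Function.update x k a) - g (Function.update x k a') ≤ c k)
    (hc : 0 < ∑ k, c k ^ 2) {t : ℝ} (ht : 0 ≤ t) :
    ∑ x with t ≤ |g x - ∑ y, (∏ k, w k (y k)) * g y|, ∏ k, w k (x k) ≤
      2 * exp (-2 * t ^ 2 / ∑ k, c k ^ 2) := by
  have := sum_filter_abs_le_two_mul_exp (fun x => prod_nonneg fun k _ => hw0 k (x k))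
    (V := (∑ k, c k ^ 2) / 4) (by positivity) ht
    fun l => (sum_prod_mul_exp_mul_sub_le hw0 hw1 hg l).trans_eq (by ring_nf)
  refine this.trans_eq ?_
  congr 2
  field_simp
  ring

noncomputable def gibbsWeight {α : Type*} [Fintype α] (φ : α → ℝ) (a : α) : ℝ :=
  exp (φ a) / ∑ b, exp (φ b)

section Gibbs

variable {α : Type*} [Fintype α]

theorem gibbsWeight_nonneg (φ : α → ℝ) (a : α) : 0 ≤ gibbsWeight φ a := by
  unfold gibbsWeight
  positivity

theorem sum_gibbsWeight [Nonempty α] (φ : α → ℝ) : ∑ a, gibbsWeight φ a = 1 := by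
  simp only [gibbsWeight]
  rw [← sum_div, div_self (sum_pos (fun a _ => exp_pos _) univ_nonempty).ne']

theorem gibbsWeight_sum_pi {ι : Type*} [Fintype ι] [DecidableEq ι] {F : ι → Type*}
    [∀ k, Fintype (F k)] (φ : ∀ k, F k → ℝ) (x : ∀ k, F k) :
    gibbsWeight (fun y => ∑ k, φ k (y k)) x = ∏ k, gibbsWeight (φ k) (x k) := by
  simp only [gibbsWeight, exp_sum, prod_div_distrib, Fintype.prod_sum]

end Gibbs

section LocalDependence

variable {K : ℕ} {n : Fin K → ℕ}

theorem hamDist_update_le (x : Cfg K n) (k : Fin K) (a a' : Fin ((n k).choose 2) → Bool) :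
    hamDist (Function.update x k a) (Function.update x k a') ≤ (n k).choose 2 := by
  rw [hamDist, sum_eq_single k (fun j _ hj => by simp [Function.update_of_ne hj]) (by simp)]
  exact (card_filter_le _ _).trans (by simp)

theorem sum_sq_choose_two_le {N : ℕ} (hN : ∀ k, n k ≤ N) :
    ∑ k, ((n k).choose 2 : ℝ) ^ 2 ≤ (N : ℝ) ^ 2 * ∑ k, ((n k).choose 2 : ℝ) := by
  rw [mul_sum]
  refine sum_le_sum fun k _ => ?_
  have : ((n k).choose 2 : ℝ) ≤ (N : ℝ) ^ 2 := by
    exact_mod_cast (Nat.choose_le_pow _ _).trans (Nat.pow_le_pow_left (hN k) 2)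
  rw [sq]
  exact mul_le_mul_of_nonneg_right this (Nat.cast_nonneg _)

theorem sum_filter_le_of_abs_sub_le_hamDist {w : ∀ k, (Fin ((n k).choose 2) → Bool) → ℝ}
    (hw0 : ∀ k a, 0 ≤ w k a) (hw1 : ∀ k, ∑ a, w k a = 1) {f : Cfg K n → ℝ} {A : ℝ} {N : ℕ}
    (hA : 0 < A) (hN : ∀ k, n k ≤ N) (hM : 1 ≤ ∑ k, (n k).choose 2)
    (hf : ∀ x y, |f x - f y| ≤ A * hamDist x y * N) {c : ℝ} (hc : 0 ≤ c) :
    ∑ x with c * ∑ k, ((n k).choose 2 : ℝ) ≤ |f x - ∑ y, (∏ k, w k (y k)) * f y|,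
        ∏ k, w k (x k) ≤
      2 * exp (-(c ^ 2 * ∑ k, ((n k).choose 2 : ℝ)) / (2 * A ^ 2 * (N : ℝ) ^ 6)) := by
  obtain ⟨k₀, -, hk₀⟩ := exists_ne_zero_of_sum_ne_zero (by omega : ∑ k, (n k).choose 2 ≠ 0)
  have hN1 : (1 : ℝ) ≤ N := by
    have := hN k₀
    have := Nat.choose_eq_zero_iff.not.mp hk₀
    exact_mod_cast (by omega : 1 ≤ N)
  have hM1 : (1 : ℝ) ≤ ∑ k, ((n k).choose 2 : ℝ) := by exact_mod_cast hM
  have hdiff : ∀ x k a a', f (Function.update x k a) - f (Function.update x k a') ≤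
      A * N * (n k).choose 2 := fun x k a a' => by
    refine (le_abs_self _).trans ((hf _ _).trans ?_)
    have : (hamDist (Function.update x k a) (Function.update x k a') : ℝ) ≤ (n k).choose 2 := by
      exact_mod_cast hamDist_update_le x k a a'
    nlinarith [mul_le_mul_of_nonneg_left this (by positivity : (0 : ℝ) ≤ A * N)]
  have hS : ∑ k, (A * N * (n k).choose 2) ^ 2 ≤ A ^ 2 * N ^ 6 * ∑ k, ((n k).choose 2 : ℝ) :=
    calc ∑ k, (A * N * (n k).choose 2) ^ 2 = A ^ 2 * N ^ 2 * ∑ k, ((n k).choose 2 : ℝ) ^ 2 := by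
          simp_rw [mul_pow, ← mul_sum]
      _ ≤ A ^ 2 * N ^ 2 * (N ^ 2 * ∑ k, ((n k).choose 2 : ℝ)) := by
          gcongr
          exact sum_sq_choose_two_le hN
      _ ≤ A ^ 2 * N ^ 6 * ∑ k, ((n k).choose 2 : ℝ) := by
          have : (N : ℝ) ^ 4 ≤ N ^ 6 := pow_le_pow_right₀ hN1 (by norm_num)
          have hM0 : 0 ≤ A ^ 2 * ∑ k, ((n k).choose 2 : ℝ) := by positivity
          nlinarith [mul_le_mul_of_nonneg_left this hM0]
  have hSpos : 0 < ∑ k, (A * N * (n k).choose 2) ^ 2 :=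
    sum_pos' (fun k _ => sq_nonneg _) ⟨k₀, mem_univ _, by positivity⟩
  refine (mcdiarmid hw0 hw1 hdiff hSpos (by positivity)).trans
    (mul_le_mul_of_nonneg_left (exp_le_exp.mpr ?_) zero_le_two)
  rw [div_le_div_iff₀ hSpos (by positivity)]
  nlinarith [mul_le_mul_of_nonneg_left hS (by positivity : 0 ≤ c ^ 2 * ∑ k, ((n k).choose 2 : ℝ))]

end LocalDependence

theorem sum_mul_sub_mean {X ι : Type*} [Fintype X] [Fintype ι] {W : X → ℝ} {b : X → ι → ℝ}
    {μ : ι → ℝ} (hμ : ∀ i, μ i = ∑ y, W y * b y i) (a : ι → ℝ) (x : X) :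
    ∑ i, a i * (b x i - μ i) = ∑ i, a i * b x i - ∑ y, W y * ∑ i, a i * b y i := by
  simp only [mul_sub, sum_sub_distrib, hμ, mul_sum]
  rw [sum_comm]
  exact congrArg _ (sum_congr rfl fun y _ => sum_congr rfl fun i _ => by ring)

theorem abs_sum_mul_sub_le_add {ι : Type*} [Fintype ι] {u v β μ : ι → ℝ} {r : ℝ}
    (hβ : |∑ i, (u i - v i) * β i| ≤ r) (hμ : |∑ i, (u i - v i) * μ i| ≤ r) :
    |∑ i, u i * (β i - μ i)| ≤ |∑ i, v i * (β i - μ i)| + 2 * r := by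
  have : ∑ i, u i * (β i - μ i) =
      ∑ i, v i * (β i - μ i) + (∑ i, (u i - v i) * β i - ∑ i, (u i - v i) * μ i) := by
    rw [← sum_sub_distrib, ← sum_add_distrib]
    exact sum_congr rfl fun i _ => by ring
  rw [this]
  linarith [abs_add_le (∑ i, v i * (β i - μ i)) (∑ i, (u i - v i) * β i - ∑ i, (u i - v i) * μ i),
    abs_sub (∑ i, (u i - v i) * β i) (∑ i, (u i - v i) * μ i)]

theorem exists_le_abs_sum_mul_sub_of_net {E ι : Type*} [SeminormedAddCommGroup E] [Fintype ι]
    {Θ₀ : Set E} {al : E → ι → ℝ} {β μ : ι → ℝ} {A M ε : ℝ} {L : ℕ} {θs : Fin L → E}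
    (hlip : ∀ θ₁ ∈ Θ₀, ∀ θ₂ ∈ Θ₀, |∑ i, (al θ₁ i - al θ₂ i) * β i| ≤ A * ‖θ₁ - θ₂‖ * M ∧
      |∑ i, (al θ₁ i - al θ₂ i) * μ i| ≤ A * ‖θ₁ - θ₂‖ * M)
    (hA : 0 < A) (hM : 0 ≤ M) (hε : 0 ≤ ε) (hθs : ∀ l, θs l ∈ Θ₀)
    (hnet : ∀ θ ∈ Θ₀, ∃ l, ‖θ - θs l‖ < ε / (6 * A)) {θ : E} (hθ : θ ∈ Θ₀)
    (hdev : ε * M ≤ |∑ i, al θ i * (β i - μ i)|) :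
    ∃ l, ε / 3 * M ≤ |∑ i, al (θs l) i * (β i - μ i)| := by
  obtain ⟨l, hl⟩ := hnet θ hθ
  obtain ⟨hβ, hμ⟩ := hlip θ hθ (θs l) (hθs l)
  have hclose : A * ‖θ - θs l‖ * M ≤ ε / 6 * M := by
    rw [lt_div_iff₀ (by positivity)] at hl
    exact mul_le_mul_of_nonneg_right (by linarith) hM
  exact ⟨l, by linarith [abs_sum_mul_sub_le_add hβ hμ, mul_nonneg hε hM]⟩

theorem statement4_general
    (K : ℕ)
    (n : Fin K → ℕ)
    (hM : 1 ≤ ∑ k, Nat.choose (n k) 2)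
    (Mr : ℝ) (hMr : Mr = ∑ k, ((Nat.choose (n k) 2 : ℝ)))
    (N : ℕ) (hNub : ∀ k, n k ≤ N)
    (dk : Fin K → ℕ)
    (η : (k : Fin K) → Fin (dk k) → ℝ)
    (s : (k : Fin K) → (Fin (Nat.choose (n k) 2) → Bool) → Fin (dk k) → ℝ)
    (Z : ℝ)
    (hZ : Z = ∑ x : Cfg K n, Real.exp (∑ k, ∑ i, η k i * s k (x k) i))
    (p : Cfg K n → ℝ)
    (hp : ∀ x, p x = Real.exp (∑ k, ∑ i, η k i * s k (x k) i) / Z)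
    (q d : ℕ)
    (Θ₀ : Set (EuclideanSpace ℝ (Fin q)))
    (θd : EuclideanSpace ℝ (Fin q)) (hθd : θd ∈ Θ₀)
    (al : EuclideanSpace ℝ (Fin q) → Fin d → ℝ)
    (b : Cfg K n → Fin d → ℝ)
    (μb : Fin d → ℝ) (hμb : ∀ i, μb i = ∑ x : Cfg K n, p x * b x i)
    (ε α₀ A₃ A₄ : ℝ)
    (hε : 0 < ε) (hα₀ : 0 < α₀) (hA₃ : 0 < A₃) (hA₄ : 0 < A₄)
    (G : Set (Cfg K n))
    (hG : G = {x : Cfg K n | |∑ i, al θd i * (b x i - μb i)| < α₀ * Mr})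
    -- smoothness condition [C.3]
    (hC3 : ∀ θ₁ ∈ Θ₀, ∀ θ₂ ∈ Θ₀,
      (∀ x ∈ G, |∑ i, (al θ₁ i - al θ₂ i) * b x i| ≤ A₃ * ‖θ₁ - θ₂‖ * Mr) ∧
      |∑ i, (al θ₁ i - al θ₂ i) * μb i| ≤ A₃ * ‖θ₁ - θ₂‖ * Mr)
    -- smoothness condition [C.4]
    (hC4 : ∀ θ ∈ Θ₀, ∀ x y : Cfg K n,
      |∑ i, al θ i * (b x i - b y i)| ≤ A₄ * (hamDist x y : ℝ) * (N : ℝ))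
    -- an ε/(6·A₃)-net of Θ₀
    (L : ℕ) (θs : Fin L → EuclideanSpace ℝ (Fin q))
    (hθs : ∀ l, θs l ∈ Θ₀)
    (hnet : ∀ θ ∈ Θ₀, ∃ l, ‖θ - θs l‖ < ε / (6 * A₃)) :
    (∑' x : {x : Cfg K n //
        ∃ θ ∈ Θ₀, ε * Mr ≤ |∑ i, al θ i * (b x i - μb i)|}, p x.1) ≤
      2 * Real.exp (-(α₀ ^ 2 * Mr) / (2 * A₄ ^ 2 * (N : ℝ) ^ 6)) +
        2 * (L : ℝ) * Real.exp (-(ε ^ 2 * Mr) / (18 * A₄ ^ 2 * (N : ℝ) ^ 6)) := by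
  classical
  set φ : ∀ k, (Fin ((n k).choose 2) → Bool) → ℝ := fun k a => ∑ i, η k i * s k a i
  have hprod : ∀ x, p x = ∏ k, gibbsWeight (φ k) (x k) := fun x => by
    rw [hp, hZ, ← gibbsWeight_sum_pi]
    rfl
  have hp0 : ∀ x, 0 ≤ p x := fun x => hprod x ▸ prod_nonneg fun k _ => gibbsWeight_nonneg _ _
  have htail : ∀ θ ∈ Θ₀, ∀ c, 0 ≤ c → ∑ x with c * Mr ≤ |∑ i, al θ i * (b x i - μb i)|, p x ≤
      2 * exp (-(c ^ 2 * Mr) / (2 * A₄ ^ 2 * (N : ℝ) ^ 6)) := by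
    intro θ hθ c hc
    simp only [sum_mul_sub_mean hμb, hprod, hMr]
    refine sum_filter_le_of_abs_sub_le_hamDist (fun k => gibbsWeight_nonneg _)
      (fun k => sum_gibbsWeight _) hA₄ hNub hM (fun x y => ?_) hc
    simpa only [← sum_sub_distrib, ← mul_sub] using hC4 θ hθ x y
  have hMr0 : 0 ≤ Mr := hMr ▸ sum_nonneg fun k _ => Nat.cast_nonneg _
  have hcover : ∀ x, (∃ θ ∈ Θ₀, ε * Mr ≤ |∑ i, al θ i * (b x i - μb i)|) →
      α₀ * Mr ≤ |∑ i, al θd i * (b x i - μb i)| ∨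
        ∃ l, ε / 3 * Mr ≤ |∑ i, al (θs l) i * (b x i - μb i)| := by
    rintro x ⟨θ, hθ, hdev⟩
    refine or_iff_not_imp_left.mpr fun hxG => ?_
    have hx : x ∈ G := by rw [hG]; exact not_le.mp hxG
    exact exists_le_abs_sum_mul_sub_of_net (fun θ₁ h₁ θ₂ h₂ => (hC3 θ₁ h₁ θ₂ h₂).imp_left (· x hx))
      hA₃ hMr0 hε.le hθs hnet hθ hdev
  rw [tsum_fintype, ← subtype_univ, sum_subtype_eq_sum_filter]
  refine ((sum_filter_le_sum_filter_add hp0 hcover).trans (add_le_add (htail θd hθd α₀ hα₀.le)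
    ((sum_filter_le_sum_sum_filter hp0 fun _ => id).trans
      (sum_le_sum fun l _ => htail _ (hθs l) (ε / 3) (by positivity))))).trans_eq ?_
  rw [sum_const, card_univ, Fintype.card_fin, nsmul_eq_mul]
  ring_nf

/-- Finite-sample, explicit-constant instance of Proposition 2 of the paper
(uniform convergence of the estimating function over `Θ₀`): under the smoothness
conditions [C.3] (on the good event `G` and at `μ̄`) and [C.4], and with an
`ε/(6·A₃)`-net `θ_1, …, θ_L` of `Θ₀`, the probability that
`|⟨𝛂(θ), b(X) − μ̄⟩| ≥ ε·M` for some `θ ∈ Θ₀` is at most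
`2·exp(−α₀²·M/(2·A₄²·N⁶)) + 2·L·exp(−ε²·M/(18·A₄²·N⁶))`. -/
theorem statement4
    (K : ℕ) (hK : 1 ≤ K)
    (n : Fin K → ℕ) (hn : ∀ k, 1 ≤ n k)
    (hM : 1 ≤ ∑ k, Nat.choose (n k) 2)
    (Mr : ℝ) (hMr : Mr = ∑ k, ((Nat.choose (n k) 2 : ℝ)))
    (N : ℕ) (hNub : ∀ k, n k ≤ N) (hNmem : ∃ k, n k = N)
    (dk : Fin K → ℕ)
    (η : (k : Fin K) → Fin (dk k) → ℝ)
    (s : (k : Fin K) → (Fin (Nat.choose (n k) 2) → Bool) → Fin (dk k) → ℝ)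
    (Z : ℝ)
    (hZ : Z = ∑ x : Cfg K n, Real.exp (∑ k, ∑ i, η k i * s k (x k) i))
    (p : Cfg K n → ℝ)
    (hp : ∀ x, p x = Real.exp (∑ k, ∑ i, η k i * s k (x k) i) / Z)
    (q d : ℕ)
    (Θ₀ : Set (EuclideanSpace ℝ (Fin q))) (hΘ₀ : Θ₀.Nonempty)
    (θd : EuclideanSpace ℝ (Fin q)) (hθd : θd ∈ Θ₀)
    (al : EuclideanSpace ℝ (Fin q) → Fin d → ℝ)
    (b : Cfg K n → Fin d → ℝ)
    (μb : Fin d → ℝ) (hμb : ∀ i, μb i = ∑ x : Cfg K n, p x * b x i)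
    (ε α₀ A₃ A₄ : ℝ)
    (hε : 0 < ε) (hα₀ : 0 < α₀) (hA₃ : 0 < A₃) (hA₄ : 0 < A₄)
    (G : Set (Cfg K n))
    (hG : G = {x : Cfg K n | |∑ i, al θd i * (b x i - μb i)| < α₀ * Mr})
    -- smoothness condition [C.3]
    (hC3 : ∀ θ₁ ∈ Θ₀, ∀ θ₂ ∈ Θ₀,
      (∀ x ∈ G, |∑ i, (al θ₁ i - al θ₂ i) * b x i| ≤ A₃ * ‖θ₁ - θ₂‖ * Mr) ∧
      |∑ i, (al θ₁ i - al θ₂ i) * μb i| ≤ A₃ * ‖θ₁ - θ₂‖ * Mr)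
    -- smoothness condition [C.4]
    (hC4 : ∀ θ ∈ Θ₀, ∀ x y : Cfg K n,
      |∑ i, al θ i * (b x i - b y i)| ≤ A₄ * (hamDist x y : ℝ) * (N : ℝ))
    -- an ε/(6·A₃)-net of Θ₀
    (L : ℕ) (θs : Fin L → EuclideanSpace ℝ (Fin q))
    (hθs : ∀ l, θs l ∈ Θ₀)
    (hnet : ∀ θ ∈ Θ₀, ∃ l, ‖θ - θs l‖ < ε / (6 * A₃)) :
    (∑' x : {x : Cfg K n //
        ∃ θ ∈ Θ₀, ε * Mr ≤ |∑ i, al θ i * (b x i - μb i)|}, p x.1) ≤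
      2 * Real.exp (-(α₀ ^ 2 * Mr) / (2 * A₄ ^ 2 * (N : ℝ) ^ 6)) +
        2 * (L : ℝ) * Real.exp (-(ε ^ 2 * Mr) / (18 * A₄ ^ 2 * (N : ℝ) ^ 6)) :=
  statement4_general K n hM Mr hMr N hNub dk η s Z hZ p hp q d Θ₀ θd hθd al b μb hμb ε α₀ A₃ A₄ hε
    hα₀ hA₃ hA₄ G hG hC3 hC4 L θs hθs hnet
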